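/- Simplified recursion for the singleton target: writing f_{k,r} := f_{k,r}^{{a}}, for r = 2p (p ≥ 1) and all k in the domain of definition, f_{k+1,r} = min { f_{k,r} + f_{k-r+1,r}, f_{k-1,r} + f_{k-r+2,r}, …, f_{k-p+1,r} + f_{k-p,r} } (the minimum over all pairs f_{k-i+1,r} + f_{k-j+1,r} with 1 ≤ i ≤ j ≤ r and i + j = r + 1). For r = 2p−1 (p ≥ 2), the last term in the minimum is instead 2·f_{k-p+1,r}. -/

import Mathlib

open Finset

/-- Fitch's parsimony operation: intersection if nonempty, otherwise union. -/
def fitchOp {α : Type*} [DecidableEq α] (B C : Finset α) : Finset α :=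
  if (B ∩ C).Nonempty then B ∩ C else B ∪ C

/-- `fCS a R k A` is `f_{k,r}^A`: the minimum number of leaves of the fully
bifurcating tree `T_k` that must be assigned state `a` in order for the Fitch
root state set to equal `A`, defined by the standard-decomposition recursion,
with base case `f_{0,r}^{{x}} = 1` if `x = a` and `0` otherwise. -/
noncomputable def fCS {α : Type*} [DecidableEq α] (a : α) (R : Finset α) :
    ℕ → Finset α → ℕ
  | 0, A => if a ∈ A then 1 else 0
  | (k+1), A => sInf {n : ℕ | ∃ B C : Finset α, B ⊆ R ∧ C ⊆ R ∧
      B.Nonempty ∧ C.Nonempty ∧ B.card ≤ 2 ^ k ∧ C.card ≤ 2 ^ k ∧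
      fitchOp B C = A ∧ n = fCS a R k B + fCS a R k C}

section Helpers
variable {α : Type*} [DecidableEq α] (a : α) (R : Finset α)

lemma fCS_succ (k : ℕ) (A : Finset α) : fCS a R (k+1) A =
    sInf {n : ℕ | ∃ B C : Finset α, B ⊆ R ∧ C ⊆ R ∧
      B.Nonempty ∧ C.Nonempty ∧ B.card ≤ 2 ^ k ∧ C.card ≤ 2 ^ k ∧
      fitchOp B C = A ∧ n = fCS a R k B + fCS a R k C} := by
  rfl

lemma fCS_zero (A : Finset α) : fCS a R 0 A = if a ∈ A then 1 else 0 := rfl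

variable {a R}

lemma fitch_subset_union (B C : Finset α) : fitchOp B C ⊆ B ∪ C := by
  unfold fitchOp; split
  · exact (inter_subset_left).trans subset_union_left
  · exact Finset.Subset.refl _

lemma fitch_eq_singleton {B C : Finset α} (hB : B.Nonempty) (hC : C.Nonempty)
    (h : fitchOp B C = {a}) : B ∩ C = {a} := by
  unfold fitchOp at h
  split at h
  · exact h
  · next hne =>
    exfalso
    have hB' : B = {a} := by
      apply Finset.eq_of_subset_of_card_le (h ▸ subset_union_left)
      simpa using hB.card_pos
    have hC' : C = {a} := by
      apply Finset.eq_of_subset_of_card_le (h ▸ subset_union_right)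
      simpa using hC.card_pos
    exact hne ⟨a, by simp [hB', hC']⟩

lemma exists_decomp (k : ℕ) {A : Finset α} (hA : A ⊆ R) (hne : A.Nonempty)
    (hcard : A.card ≤ 2 ^ (k+1)) :
    ∃ B C : Finset α, B ⊆ A ∧ C ⊆ A ∧ B.Nonempty ∧ C.Nonempty ∧
      B.card ≤ 2 ^ k ∧ C.card ≤ 2 ^ k ∧ fitchOp B C = A := by
  by_cases h : A.card ≤ 2 ^ k
  · refine ⟨A, A, le_refl _, le_refl _, hne, hne, h, h, ?_⟩
    unfold fitchOp
    rw [Finset.inter_self, if_pos hne]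
  · push_neg at h
    obtain ⟨B, hBA, hBcard⟩ := Finset.exists_subset_card_eq (le_of_lt h)
    refine ⟨B, A \ B, hBA, sdiff_subset, ?_, ?_, le_of_eq hBcard, ?_, ?_⟩
    · rw [← Finset.card_pos, hBcard]; positivity
    · rw [← Finset.card_pos, Finset.card_sdiff_of_subset hBA, hBcard]; omega
    · rw [Finset.card_sdiff_of_subset hBA, hBcard]; omega
    · unfold fitchOp
      rw [Finset.inter_sdiff_self, if_neg (by simp), Finset.union_sdiff_of_subset hBA]

lemma fCS_eq_zero (haR : a ∈ R) : ∀ k (A : Finset α), A ⊆ R → a ∉ A → A.Nonempty →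
    A.card ≤ 2 ^ k → fCS a R k A = 0 := by
  intro k
  induction k with
  | zero => intro A _ ha _ _; rw [fCS_zero, if_neg ha]
  | succ k ih =>
    intro A hAR ha hne hcard
    obtain ⟨B, C, hBA, hCA, hBne, hCne, hBc, hCc, hf⟩ := exists_decomp k hAR hne hcard
    rw [fCS_succ]
    have h0 : 0 ∈ {n : ℕ | ∃ B C : Finset α, B ⊆ R ∧ C ⊆ R ∧
      B.Nonempty ∧ C.Nonempty ∧ B.card ≤ 2 ^ k ∧ C.card ≤ 2 ^ k ∧
      fitchOp B C = A ∧ n = fCS a R k B + fCS a R k C} := by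
      refine ⟨B, C, hBA.trans hAR, hCA.trans hAR, hBne, hCne, hBc, hCc, hf, ?_⟩
      rw [ih B (hBA.trans hAR) (fun h => ha (hBA h)) hBne (hBc.trans (by norm_num)),
        ih C (hCA.trans hAR) (fun h => ha (hCA h)) hCne (hCc.trans (by norm_num))]
    exact Nat.sInf_eq_zero.2 (Or.inl h0)

lemma fCS_pos (haR : a ∈ R) : ∀ k (A : Finset α), A ⊆ R → a ∈ A →
    A.card ≤ 2 ^ k → 1 ≤ fCS a R k A := by
  intro k
  induction k with
  | zero => intro A _ ha _; rw [fCS_zero, if_pos ha]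
  | succ k ih =>
    intro A hAR ha hcard
    obtain ⟨B, C, hBA, hCA, hBne, hCne, hBc, hCc, hf⟩ := exists_decomp k hAR ⟨a, ha⟩ hcard
    rw [fCS_succ]
    have hSne : Set.Nonempty {n : ℕ | ∃ B C : Finset α, B ⊆ R ∧ C ⊆ R ∧
      B.Nonempty ∧ C.Nonempty ∧ B.card ≤ 2 ^ k ∧ C.card ≤ 2 ^ k ∧
      fitchOp B C = A ∧ n = fCS a R k B + fCS a R k C} :=
      ⟨_, B, C, hBA.trans hAR, hCA.trans hAR, hBne, hCne, hBc, hCc, hf, rfl⟩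
    obtain ⟨B', C', hB'R, hC'R, _, _, hB'c, hC'c, hf', hn⟩ := Nat.sInf_mem hSne
    have haBC : a ∈ B' ∪ C' := fitch_subset_union B' C' (hf' ▸ ha)
    rw [hn]
    rcases Finset.mem_union.1 haBC with h | h
    · have := ih B' hB'R h hB'c; omega
    · have := ih C' hC'R h hC'c; omega

end Helpers

section Core
variable {α : Type*} [DecidableEq α] (a : α) (R : Finset α)

def REDP (k : ℕ) : Prop := ∀ A : Finset α, A ⊆ R → a ∈ A → A.card ≤ k + 1 →
  fCS a R k A = fCS a R (k + 1 - A.card) {a}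

def LBP (k : ℕ) : Prop := ∀ A : Finset α, A ⊆ R → a ∈ A → A.card ≤ 2 ^ k →
  fCS a R (k + 1 - A.card) {a} ≤ fCS a R k A

variable {a R}

lemma gpos (haR : a ∈ R) (m : ℕ) : 1 ≤ fCS a R m {a} :=
  fCS_pos haR m {a} (by simpa) (by simp) (by simp [Nat.one_le_two_pow])

lemma sub_lemma (haR : a ∈ R) (m u v : ℕ) (hu : 1 ≤ u) (hv : 1 ≤ v)
    (huv : u + v ≤ R.card + 1) (hRed : REDP a R m) :
    fCS a R (m+1) {a} ≤ fCS a R (m+1-u) {a} + fCS a R (m+1-v) {a} := by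
  have hR1 : 1 ≤ R.card := Finset.card_pos.2 ⟨a, haR⟩
  set u' := min u (m+1) with hu'def
  set v' := min v (m+1) with hv'def
  have hu1 : 1 ≤ u' := le_min hu (by omega)
  have hv1 : 1 ≤ v' := le_min hv (by omega)
  have hcr : (R.erase a).card = R.card - 1 := Finset.card_erase_of_mem haR
  have hZle : (u' - 1) + (v' - 1) ≤ (R.erase a).card := by
    have h1 : u' ≤ u := min_le_left _ _
    have h2 : v' ≤ v := min_le_left _ _
    omega
  obtain ⟨Z, hZsub, hZcard⟩ := Finset.exists_subset_card_eq hZle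
  obtain ⟨X, hXZ, hXcard⟩ := Finset.exists_subset_card_eq
    (show u' - 1 ≤ Z.card by omega)
  set Y := Z \ X with hYdef
  have hYcard : Y.card = v' - 1 := by
    rw [hYdef, Finset.card_sdiff_of_subset hXZ, hZcard, hXcard]; omega
  have haX : a ∉ X := fun h => Finset.notMem_erase a R (hZsub (hXZ h))
  have haY : a ∉ Y := fun h => Finset.notMem_erase a R (hZsub (Finset.sdiff_subset h))
  set B := insert a X with hBdef
  set C := insert a Y with hCdef
  have hBcard : B.card = u' := by
    rw [hBdef, Finset.card_insert_of_notMem haX, hXcard]; omega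
  have hCcard : C.card = v' := by
    rw [hCdef, Finset.card_insert_of_notMem haY, hYcard]; omega
  have hXY : X ∩ Y = ∅ := Finset.inter_sdiff_self X Z
  have hBC : B ∩ C = {a} := by
    ext x
    simp only [hBdef, hCdef, Finset.mem_inter, Finset.mem_insert, Finset.mem_singleton]
    constructor
    · rintro ⟨hx1 | hx1, hx2 | hx2⟩
      · exact hx1
      · exact hx1
      · exact hx2
      · exfalso
        have : x ∈ X ∩ Y := Finset.mem_inter.2 ⟨hx1, hx2⟩
        rw [hXY] at this
        exact absurd this (Finset.notMem_empty x)
    · rintro rfl; exact ⟨Or.inl rfl, Or.inl rfl⟩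
  have hfitch : fitchOp B C = {a} := by
    unfold fitchOp
    rw [hBC, if_pos (Finset.singleton_nonempty a)]
  have hBR : B ⊆ R := Finset.insert_subset haR ((hXZ.trans hZsub).trans (Finset.erase_subset _ _))
  have hCR : C ⊆ R := Finset.insert_subset haR ((Finset.sdiff_subset.trans hZsub).trans (Finset.erase_subset _ _))
  have hm2 : m + 1 ≤ 2 ^ m := Nat.succ_le_of_lt (Nat.lt_two_pow_self (n := m))
  have hstep : fCS a R (m+1) {a} ≤ fCS a R m B + fCS a R m C := by
    rw [fCS_succ]
    exact Nat.sInf_le ⟨B, C, hBR, hCR, ⟨a, by simp [hBdef]⟩, ⟨a, by simp [hCdef]⟩,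
      by omega, by omega, hfitch, rfl⟩
  have hBval : fCS a R m B = fCS a R (m + 1 - u') {a} := by
    rw [hRed B hBR (by simp [hBdef]) (by omega), hBcard]
  have hCval : fCS a R m C = fCS a R (m + 1 - v') {a} := by
    rw [hRed C hCR (by simp [hCdef]) (by omega), hCcard]
  have e1 : m + 1 - u' = m + 1 - u := by omega
  have e2 : m + 1 - v' = m + 1 - v := by omega
  rw [hBval, hCval, e1, e2] at hstep
  exact hstep

lemma big (haR : a ∈ R) : ∀ k, REDP a R k ∧ LBP a R k := by
  intro k
  induction k using Nat.strong_induction_on with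
  | _ k IH =>
    cases k with
    | zero =>
      constructor
      · intro A hAR haA hcard
        have hA : {a} = A := Finset.eq_of_subset_of_card_le
          (Finset.singleton_subset_iff.2 haA) (by simpa using hcard)
        rw [← hA]; simp
      · intro A hAR haA hcard
        have hA : {a} = A := Finset.eq_of_subset_of_card_le
          (Finset.singleton_subset_iff.2 haA) (by simpa using hcard)
        rw [← hA]; simp
    | succ k =>
      have IHr : ∀ m, m ≤ k → REDP a R m := fun m hm => (IH m (by omega)).1
      have IHl : ∀ m, m ≤ k → LBP a R m := fun m hm => (IH m (by omega)).2
      have gstep : ∀ t, t ≤ k → fCS a R t {a} ≤ fCS a R (t+1) {a} := by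
        intro t ht
        have hSne : Set.Nonempty {n : ℕ | ∃ B C : Finset α, B ⊆ R ∧ C ⊆ R ∧
            B.Nonempty ∧ C.Nonempty ∧ B.card ≤ 2 ^ t ∧ C.card ≤ 2 ^ t ∧
            fitchOp B C = ({a} : Finset α) ∧ n = fCS a R t B + fCS a R t C} := by
          refine ⟨_, {a}, {a}, by simpa, by simpa, Finset.singleton_nonempty a,
            Finset.singleton_nonempty a, by simp [Nat.one_le_two_pow],
            by simp [Nat.one_le_two_pow], ?_, rfl⟩
          unfold fitchOp
          rw [Finset.inter_self, if_pos (Finset.singleton_nonempty a)]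
        rw [fCS_succ]
        obtain ⟨B, C, hBR, hCR, hBne, hCne, hBc, hCc, hf, hn⟩ := Nat.sInf_mem hSne
        rw [hn]
        have hBC : B ∩ C = {a} := fitch_eq_singleton hBne hCne hf
        have haB : a ∈ B := Finset.mem_of_mem_inter_left (hBC ▸ Finset.mem_singleton_self a)
        have haC : a ∈ C := Finset.mem_of_mem_inter_right (hBC ▸ Finset.mem_singleton_self a)
        by_cases hB1 : B.card = 1
        · have hB : {a} = B := Finset.eq_of_subset_of_card_le
            (Finset.singleton_subset_iff.2 haB) (by simp [hB1])
          rw [← hB]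
          exact Nat.le_add_right _ _
        by_cases hC1 : C.card = 1
        · have hC : {a} = C := Finset.eq_of_subset_of_card_le
            (Finset.singleton_subset_iff.2 haC) (by simp [hC1])
          rw [← hC]
          exact Nat.le_add_left _ _
        have hB2 : 2 ≤ B.card := by have := Finset.card_pos.2 hBne; omega
        have hC2 : 2 ≤ C.card := by have := Finset.card_pos.2 hCne; omega
        have lb1 : fCS a R (t + 1 - B.card) {a} ≤ fCS a R t B := IHl t ht B hBR haB hBc
        have lb2 : fCS a R (t + 1 - C.card) {a} ≤ fCS a R t C := IHl t ht C hCR haC hCc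
        have key : fCS a R t {a} ≤
            fCS a R (t + 1 - B.card) {a} + fCS a R (t + 1 - C.card) {a} := by
          cases t with
          | zero =>
            have h1 := gpos haR (0 + 1 - B.card)
            have h2 := gpos haR (0 + 1 - C.card)
            have h3 : fCS a R 0 {a} = 1 := by simp [fCS_zero]
            omega
          | succ t₀ =>
            have hsum : B.card + C.card ≤ R.card + 1 := by
              have h1 := Finset.card_union_add_card_inter B C
              have h2 : (B ∪ C).card ≤ R.card :=
                Finset.card_le_card (Finset.union_subset hBR hCR)
              rw [hBC] at h1
              simp only [Finset.card_singleton] at h1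
              omega
            have hs := sub_lemma haR t₀ (B.card - 1) (C.card - 1) (by omega) (by omega)
              (by omega) (IHr t₀ (by omega))
            have e1 : t₀ + 1 - (B.card - 1) = t₀ + 1 + 1 - B.card := by omega
            have e2 : t₀ + 1 - (C.card - 1) = t₀ + 1 + 1 - C.card := by omega
            rw [e1, e2] at hs
            exact hs
        exact key.trans (add_le_add lb1 lb2)
      have gmono : ∀ t, t ≤ k + 1 → ∀ s, s ≤ t → fCS a R s {a} ≤ fCS a R t {a} := by
        intro t
        induction t with
        | zero =>
          intro _ s hs
          have : s = 0 := by omega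
          rw [this]
        | succ t iht =>
          intro ht s hs
          rcases Nat.lt_or_ge s (t+1) with h | h
          · exact ((iht (by omega) s (by omega)).trans (gstep t (by omega)))
          · have : s = t + 1 := by omega
            rw [this]
      -- LBP (k+1)
      have LBk1 : LBP a R (k+1) := by
        intro A hAR haA hcard
        have hi1 : 1 ≤ A.card := Finset.card_pos.2 ⟨a, haA⟩
        by_cases hik : k + 2 ≤ A.card
        · have e : k + 1 + 1 - A.card = 0 := by omega
          rw [e]
          have h1 : fCS a R 0 {a} = 1 := by simp [fCS_zero]
          rw [h1]
          exact fCS_pos haR (k+1) A hAR haA hcard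
        push_neg at hik
        obtain ⟨B₀, C₀, hB₀A, hC₀A, hB₀ne, hC₀ne, hB₀c, hC₀c, hf₀⟩ :=
          exists_decomp k hAR ⟨a, haA⟩ hcard
        have hSne : Set.Nonempty {n : ℕ | ∃ B C : Finset α, B ⊆ R ∧ C ⊆ R ∧
            B.Nonempty ∧ C.Nonempty ∧ B.card ≤ 2 ^ k ∧ C.card ≤ 2 ^ k ∧
            fitchOp B C = A ∧ n = fCS a R k B + fCS a R k C} :=
          ⟨_, B₀, C₀, hB₀A.trans hAR, hC₀A.trans hAR, hB₀ne, hC₀ne, hB₀c, hC₀c, hf₀, rfl⟩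
        rw [fCS_succ]
        obtain ⟨B, C, hBR, hCR, hBne, hCne, hBc, hCc, hf, hn⟩ := Nat.sInf_mem hSne
        rw [hn]
        unfold fitchOp at hf
        split at hf
        · -- intersection case : B ∩ C = A
          next hint =>
          have haB : a ∈ B := Finset.mem_of_mem_inter_left (hf ▸ haA)
          have haC : a ∈ C := Finset.mem_of_mem_inter_right (hf ▸ haA)
          have hiB : A.card ≤ B.card := Finset.card_le_card (hf ▸ Finset.inter_subset_left)
          have hiC : A.card ≤ C.card := Finset.card_le_card (hf ▸ Finset.inter_subset_right)
          have lb1 : fCS a R (k + 1 - B.card) {a} ≤ fCS a R k B := IHl k le_rfl B hBR haB hBc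
          have lb2 : fCS a R (k + 1 - C.card) {a} ≤ fCS a R k C := IHl k le_rfl C hCR haC hCc
          have hsum : B.card + C.card ≤ R.card + A.card := by
            have h1 := Finset.card_union_add_card_inter B C
            have h2 : (B ∪ C).card ≤ R.card :=
              Finset.card_le_card (Finset.union_subset hBR hCR)
            rw [hf] at h1
            omega
          have key : fCS a R (k + 1 + 1 - A.card) {a} ≤
              fCS a R (k + 1 - B.card) {a} + fCS a R (k + 1 - C.card) {a} := by
            have hs := sub_lemma haR (k + 1 - A.card) (B.card + 1 - A.card)
              (C.card + 1 - A.card) (by omega) (by omega) (by omega)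
              (IHr (k + 1 - A.card) (by omega))
            have e0 : k + 1 - A.card + 1 = k + 1 + 1 - A.card := by omega
            have e1 : k + 1 - A.card + 1 - (B.card + 1 - A.card) = k + 1 - B.card := by omega
            have e2 : k + 1 - A.card + 1 - (C.card + 1 - A.card) = k + 1 - C.card := by omega
            rw [e1, e2, e0] at hs
            exact hs
          exact key.trans (add_le_add lb1 lb2)
        · -- union case : B ∪ C = A, B ∩ C = ∅
          next hint =>
          have hd : B ∩ C = ∅ := Finset.not_nonempty_iff_eq_empty.1 hint
          have hmain : ∀ B' C' : Finset α, B' ⊆ R → B'.card ≤ 2 ^ k → a ∈ B' →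
              B' ∪ C' = A → C'.Nonempty → B' ∩ C' = ∅ →
              fCS a R (k + 1 + 1 - A.card) {a} ≤ fCS a R k B' := by
            intro B' C' hR' hc' ha' hun hCne' hd'
            have hsum : B'.card + C'.card = A.card := by
              rw [← hun]
              exact (Finset.card_union_of_disjoint
                (Finset.disjoint_iff_inter_eq_empty.2 hd')).symm
            have hC1 : 1 ≤ C'.card := Finset.card_pos.2 hCne'
            have lb := IHl k le_rfl B' hR' ha' hc'
            refine le_trans ?_ lb
            exact gmono (k + 1 - B'.card) (by omega) (k + 1 + 1 - A.card) (by omega)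
          rcases Finset.mem_union.1 (hf ▸ haA) with h | h
          · exact le_trans (hmain B C hBR hBc h hf hCne hd) (Nat.le_add_right _ _)
          · have hf' : C ∪ B = A := by rw [Finset.union_comm]; exact hf
            have hd' : C ∩ B = ∅ := by rw [Finset.inter_comm]; exact hd
            exact le_trans (hmain C B hCR hCc h hf' hBne hd') (Nat.le_add_left _ _)
      -- REDP (k+1)
      have REDk1 : REDP a R (k+1) := by
        intro A hAR haA hcard
        have hi1 : 1 ≤ A.card := Finset.card_pos.2 ⟨a, haA⟩
        have h2pow : k + 2 ≤ 2 ^ (k + 1) := by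
          have := Nat.lt_two_pow_self (n := k + 1); omega
        refine le_antisymm ?_ (LBk1 A hAR haA (by omega))
        by_cases hA1 : A.card = 1
        · have hA : {a} = A := Finset.eq_of_subset_of_card_le
            (Finset.singleton_subset_iff.2 haA) (by simp [hA1])
          rw [← hA]
          simp
        · have hAe : (A.erase a).Nonempty := by
            rw [← Finset.card_pos, Finset.card_erase_of_mem haA]; omega
          obtain ⟨c, hc⟩ := hAe
          have hca : c ≠ a := Finset.ne_of_mem_erase hc
          have hcA : c ∈ A := Finset.mem_of_mem_erase hc
          have haAc : a ∈ A.erase c := Finset.mem_erase.2 ⟨Ne.symm hca, haA⟩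
          have hfitch : fitchOp {c} (A.erase c) = A := by
            unfold fitchOp
            rw [Finset.singleton_inter_of_notMem (Finset.notMem_erase c A),
              if_neg (by simp), ← Finset.insert_eq, Finset.insert_erase hcA]
          have hec : (A.erase c).card = A.card - 1 := Finset.card_erase_of_mem hcA
          have hle : fCS a R (k+1) A ≤ fCS a R k {c} + fCS a R k (A.erase c) := by
            rw [fCS_succ]
            refine Nat.sInf_le ⟨{c}, A.erase c, by simpa using hAR hcA,
              (Finset.erase_subset _ _).trans hAR, Finset.singleton_nonempty c,
              ⟨a, haAc⟩, by simp [Nat.one_le_two_pow], ?_, hfitch, rfl⟩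
            have : k + 1 ≤ 2 ^ k := Nat.succ_le_of_lt (Nat.lt_two_pow_self (n := k))
            omega
          have hzero : fCS a R k {c} = 0 :=
            fCS_eq_zero haR k {c} (by simpa using hAR hcA) (by simpa using Ne.symm hca)
              (Finset.singleton_nonempty c) (by simp [Nat.one_le_two_pow])
          have hred : fCS a R k (A.erase c) = fCS a R (k + 1 - (A.card - 1)) {a} := by
            rw [IHr k le_rfl (A.erase c) ((Finset.erase_subset _ _).trans hAR) haAc
              (by omega), hec]
          have e : k + 1 - (A.card - 1) = k + 1 + 1 - A.card := by omega
          rw [hzero, hred, e] at hle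
          simpa using hle
      exact ⟨REDk1, LBk1⟩

end Core

section Main
variable {α : Type*} [DecidableEq α] {a : α} {R : Finset α}

lemma gstep_global (haR : a ∈ R) (t : ℕ) :
    fCS a R t {a} ≤ fCS a R (t+1) {a} := by
  have IHr : ∀ m, REDP a R m := fun m => (big haR m).1
  have IHl : ∀ m, LBP a R m := fun m => (big haR m).2
  have hSne : Set.Nonempty {n : ℕ | ∃ B C : Finset α, B ⊆ R ∧ C ⊆ R ∧
      B.Nonempty ∧ C.Nonempty ∧ B.card ≤ 2 ^ t ∧ C.card ≤ 2 ^ t ∧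
      fitchOp B C = ({a} : Finset α) ∧ n = fCS a R t B + fCS a R t C} := by
    refine ⟨_, {a}, {a}, by simpa, by simpa, Finset.singleton_nonempty a,
      Finset.singleton_nonempty a, by simp [Nat.one_le_two_pow],
      by simp [Nat.one_le_two_pow], ?_, rfl⟩
    unfold fitchOp
    rw [Finset.inter_self, if_pos (Finset.singleton_nonempty a)]
  rw [fCS_succ]
  obtain ⟨B, C, hBR, hCR, hBne, hCne, hBc, hCc, hf, hn⟩ := Nat.sInf_mem hSne
  rw [hn]
  have hBC : B ∩ C = {a} := fitch_eq_singleton hBne hCne hf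
  have haB : a ∈ B := Finset.mem_of_mem_inter_left (hBC ▸ Finset.mem_singleton_self a)
  have haC : a ∈ C := Finset.mem_of_mem_inter_right (hBC ▸ Finset.mem_singleton_self a)
  by_cases hB1 : B.card = 1
  · have hB : {a} = B := Finset.eq_of_subset_of_card_le
      (Finset.singleton_subset_iff.2 haB) (by simp [hB1])
    rw [← hB]
    exact Nat.le_add_right _ _
  by_cases hC1 : C.card = 1
  · have hC : {a} = C := Finset.eq_of_subset_of_card_le
      (Finset.singleton_subset_iff.2 haC) (by simp [hC1])
    rw [← hC]
    exact Nat.le_add_left _ _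
  have hB2 : 2 ≤ B.card := by have := Finset.card_pos.2 hBne; omega
  have hC2 : 2 ≤ C.card := by have := Finset.card_pos.2 hCne; omega
  have lb1 : fCS a R (t + 1 - B.card) {a} ≤ fCS a R t B := IHl t B hBR haB hBc
  have lb2 : fCS a R (t + 1 - C.card) {a} ≤ fCS a R t C := IHl t C hCR haC hCc
  have key : fCS a R t {a} ≤
      fCS a R (t + 1 - B.card) {a} + fCS a R (t + 1 - C.card) {a} := by
    cases t with
    | zero =>
      have h1 := gpos haR (0 + 1 - B.card)
      have h2 := gpos haR (0 + 1 - C.card)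
      have h3 : fCS a R 0 {a} = 1 := by simp [fCS_zero]
      omega
    | succ t₀ =>
      have hsum : B.card + C.card ≤ R.card + 1 := by
        have h1 := Finset.card_union_add_card_inter B C
        have h2 : (B ∪ C).card ≤ R.card :=
          Finset.card_le_card (Finset.union_subset hBR hCR)
        rw [hBC] at h1
        simp only [Finset.card_singleton] at h1
        omega
      have hs := sub_lemma haR t₀ (B.card - 1) (C.card - 1) (by omega) (by omega)
        (by omega) (IHr t₀)
      have e1 : t₀ + 1 - (B.card - 1) = t₀ + 1 + 1 - B.card := by omega
      have e2 : t₀ + 1 - (C.card - 1) = t₀ + 1 + 1 - C.card := by omega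
      rw [e1, e2] at hs
      exact hs
  exact key.trans (add_le_add lb1 lb2)

lemma gmono (haR : a ∈ R) {s t : ℕ} (h : s ≤ t) :
    fCS a R s {a} ≤ fCS a R t {a} := by
  induction t with
  | zero =>
    have : s = 0 := by omega
    rw [this]
  | succ t iht =>
    rcases Nat.lt_or_ge s (t+1) with h' | h'
    · exact (iht (by omega)).trans (gstep_global haR t)
    · have : s = t + 1 := by omega
      rw [this]

end Main


/-- simplified recursion for the singleton target: the minimum
over all pairs f_{k-i+1,r} + f_{k-j+1,r} with 1 ≤ i ≤ j ≤ r and i + j = r + 1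
(for odd r = 2p-1 the final term is 2·f_{k-p+1,r}, which is exactly the i = p
term of the same family, since then j = p as well). -/
theorem stmt_9 {α : Type*} [DecidableEq α] (a : α) (R : Finset α)
    (haR : a ∈ R) (p k : ℕ)
    (hp : (R.card = 2 * p ∧ 1 ≤ p) ∨ (R.card = 2 * p - 1 ∧ 2 ≤ p))
    (hk : R.card ≤ k + 1) :
    fCS a R (k + 1) {a} =
      (Finset.Icc 1 p).inf'
        (Finset.nonempty_Icc.mpr (by rcases hp with ⟨_, h⟩ | ⟨_, h⟩ <;> omega))
        (fun i => fCS a R (k - i + 1) {a} + fCS a R (k - (R.card - i)) {a}) := by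
  have hp1 : 1 ≤ p := by rcases hp with ⟨_, h⟩ | ⟨_, h⟩ <;> omega
  have hpr : p + 1 ≤ R.card := by rcases hp with ⟨h1, h2⟩ | ⟨h1, h2⟩ <;> omega
  have hRED : ∀ m, REDP a R m := fun m => (big haR m).1
  have hk2 : R.card ≤ 2 ^ k := hk.trans (Nat.succ_le_of_lt (Nat.lt_two_pow_self (n := k)))
  apply le_antisymm
  · apply Finset.le_inf'
    intro i hi
    obtain ⟨hi1, hip⟩ := Finset.mem_Icc.1 hi
    have hs := sub_lemma haR k i (R.card + 1 - i) (by omega) (by omega) (by omega)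
      (hRED k)
    have e1 : k - i + 1 = k + 1 - i := by omega
    have e2 : k - (R.card - i) = k + 1 - (R.card + 1 - i) := by omega
    simp only [e1, e2]
    exact hs
  · rw [fCS_succ]
    have hSne : Set.Nonempty {n : ℕ | ∃ B C : Finset α, B ⊆ R ∧ C ⊆ R ∧
        B.Nonempty ∧ C.Nonempty ∧ B.card ≤ 2 ^ k ∧ C.card ≤ 2 ^ k ∧
        fitchOp B C = ({a} : Finset α) ∧ n = fCS a R k B + fCS a R k C} := by
      refine ⟨_, {a}, {a}, by simpa, by simpa, Finset.singleton_nonempty a,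
        Finset.singleton_nonempty a, by simp [Nat.one_le_two_pow],
        by simp [Nat.one_le_two_pow], ?_, rfl⟩
      unfold fitchOp
      rw [Finset.inter_self, if_pos (Finset.singleton_nonempty a)]
    obtain ⟨B, C, hBR, hCR, hBne, hCne, hBc, hCc, hf, hn⟩ := Nat.sInf_mem hSne
    rw [hn]
    have hBC : B ∩ C = {a} := fitch_eq_singleton hBne hCne hf
    have haB : a ∈ B := Finset.mem_of_mem_inter_left (hBC ▸ Finset.mem_singleton_self a)
    have haC : a ∈ C := Finset.mem_of_mem_inter_right (hBC ▸ Finset.mem_singleton_self a)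
    have hsum : B.card + C.card ≤ R.card + 1 := by
      have h1 := Finset.card_union_add_card_inter B C
      have h2 : (B ∪ C).card ≤ R.card :=
        Finset.card_le_card (Finset.union_subset hBR hCR)
      rw [hBC] at h1
      simp only [Finset.card_singleton] at h1
      omega
    have hB1 : 1 ≤ B.card := Finset.card_pos.2 hBne
    have hC1 : 1 ≤ C.card := Finset.card_pos.2 hCne
    have hBr : B.card ≤ R.card := Finset.card_le_card hBR
    have hCr : C.card ≤ R.card := Finset.card_le_card hCR
    have hredB : fCS a R k B = fCS a R (k + 1 - B.card) {a} :=
      hRED k B hBR haB (by omega)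
    have hredC : fCS a R k C = fCS a R (k + 1 - C.card) {a} :=
      hRED k C hCR haC (by omega)
    rw [hredB, hredC]
    have main : ∀ b c : ℕ, 1 ≤ b → b ≤ c → b + c ≤ R.card + 1 → c ≤ R.card →
        (Finset.Icc 1 p).inf'
          (Finset.nonempty_Icc.mpr (by omega))
          (fun i => fCS a R (k - i + 1) {a} + fCS a R (k - (R.card - i)) {a}) ≤
        fCS a R (k + 1 - b) {a} + fCS a R (k + 1 - c) {a} := by
      intro b c hb hbc hbcs hcr
      have hbp : b ≤ p := by rcases hp with ⟨h1, _⟩ | ⟨h1, _⟩ <;> omega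
      refine le_trans (Finset.inf'_le _ (Finset.mem_Icc.2 ⟨hb, hbp⟩)) ?_
      apply add_le_add
      · have e1 : k - b + 1 = k + 1 - b := by omega
        rw [e1]
      · exact gmono haR (by omega)
    rcases le_total B.card C.card with h | h
    · exact main B.card C.card hB1 h hsum hCr
    · exact (main C.card B.card hC1 h (by omega) hBr).trans
        (le_of_eq (add_comm _ _))
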